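/- For fixed μ, ν ∈ ℝ, the map ρ ↦ Φ₂(μ,ν;ρ) is strictly increasing on (-1,1). -/

import Mathlib

open MeasureTheory Real Set Filter

noncomputable def stdPdf (x : ℝ) : ℝ := (Real.sqrt (2 * Real.pi))⁻¹ * Real.exp (-(x ^ 2) / 2)

noncomputable def stdCdf (x : ℝ) : ℝ := ∫ v in Set.Iio x, stdPdf v

noncomputable def Phi2 (μ ν ρ : ℝ) : ℝ :=
  ∫ v in Set.Iio μ, stdCdf ((ν - ρ * v) / Real.sqrt (1 - ρ ^ 2)) * stdPdf v

noncomputable def phi2 (μ ν ρ : ℝ) : ℝ :=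
  (2 * Real.pi * Real.sqrt (1 - ρ ^ 2))⁻¹ *
    Real.exp (-(μ ^ 2 - 2 * ρ * μ * ν + ν ^ 2) / (2 * (1 - ρ ^ 2)))

/-!
Differentiating under the integral sign, `∂Φ₂/∂ρ` is the integral over `v < μ` of
`φ(w) φ(v) (ρν - v) / (1 - ρ²)^{3/2}` with `w = (ν - ρv) / √(1 - ρ²)`. Since
`φ(w) φ(v) = √(1 - ρ²) φ₂(v, ν; ρ)`, this integrand is exactly `∂/∂v φ₂(v, ν; ρ)`, so
`∂Φ₂/∂ρ = φ₂(μ, ν; ρ) > 0` (Plackett's identity).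
-/

open ProbabilityTheory Topology

theorem hasDerivAt_integral_Iio {E : Type*} [NormedAddCommGroup E] [NormedSpace ℝ E]
    [CompleteSpace E] {f : ℝ → E} (hf : Integrable f) {x : ℝ} (hx : ContinuousAt f x) :
    HasDerivAt (fun y => ∫ t in Iio y, f t) (f x) x := by
  have hFTC : HasDerivAt (fun y => ∫ t in (0 : ℝ)..y, f t) (f x) x :=
    intervalIntegral.integral_hasDerivAt_right hf.intervalIntegrable
      hf.aestronglyMeasurable.stronglyMeasurableAtFilter hx
  refine (hFTC.const_add (∫ t in Iic 0, f t)).congr_of_eventuallyEq (.of_forall fun y => ?_)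
  dsimp only
  rw [← integral_Iic_eq_integral_Iio,
    ← intervalIntegral.integral_Iic_sub_Iic hf.integrableOn hf.integrableOn]
  abel

lemma stdPdf_eq_gaussianPDFReal : stdPdf = gaussianPDFReal 0 1 := by
  ext x
  simp [stdPdf, gaussianPDFReal]

lemma stdPdf_nonneg (x : ℝ) : 0 ≤ stdPdf x :=
  stdPdf_eq_gaussianPDFReal ▸ gaussianPDFReal_nonneg 0 1 x

lemma stdPdf_le (x : ℝ) : stdPdf x ≤ (√(2 * π))⁻¹ :=
  mul_le_of_le_one_right (by positivity) (exp_le_one_iff.2 (by nlinarith [sq_nonneg x]))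

lemma continuous_stdPdf : Continuous stdPdf := by
  unfold stdPdf
  fun_prop

lemma integrable_stdPdf : Integrable stdPdf :=
  stdPdf_eq_gaussianPDFReal ▸ integrable_gaussianPDFReal 0 1

lemma integral_stdPdf : ∫ x, stdPdf x = 1 := by
  rw [stdPdf_eq_gaussianPDFReal]
  exact integral_gaussianPDFReal_eq_one 0 one_ne_zero

lemma integrable_add_abs_mul_stdPdf (c : ℝ) : Integrable fun v => (c + |v|) * stdPdf v := by
  have habs : Integrable fun v : ℝ => |v| * stdPdf v := by
    refine ((integrable_mul_exp_neg_mul_sq (b := 1 / 2) (by norm_num)).abs.const_mul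
      (√(2 * π))⁻¹).congr (.of_forall fun v => ?_)
    simp only [stdPdf, abs_mul, abs_of_nonneg (exp_nonneg _)]
    ring_nf
  exact ((integrable_stdPdf.const_mul c).add habs).congr
    (.of_forall fun v => (add_mul c |v| (stdPdf v)).symm)

lemma stdCdf_nonneg (x : ℝ) : 0 ≤ stdCdf x :=
  setIntegral_nonneg measurableSet_Iio fun v _ => stdPdf_nonneg v

lemma stdCdf_le_one (x : ℝ) : stdCdf x ≤ 1 :=
  integral_stdPdf ▸ setIntegral_le_integral integrable_stdPdf (.of_forall stdPdf_nonneg)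

lemma hasDerivAt_stdCdf (x : ℝ) : HasDerivAt stdCdf (stdPdf x) x :=
  hasDerivAt_integral_Iio integrable_stdPdf continuous_stdPdf.continuousAt

lemma continuous_stdCdf : Continuous stdCdf :=
  continuous_iff_continuousAt.2 fun x => (hasDerivAt_stdCdf x).continuousAt

noncomputable def Phi2Integrand (ν ρ v : ℝ) : ℝ :=
  stdCdf ((ν - ρ * v) / √(1 - ρ ^ 2)) * stdPdf v

noncomputable def Phi2IntegrandDeriv (ν ρ v : ℝ) : ℝ :=
  stdPdf ((ν - ρ * v) / √(1 - ρ ^ 2)) * ((ρ * ν - v) / √(1 - ρ ^ 2) ^ 3) * stdPdf v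

lemma continuous_Phi2Integrand (ν ρ : ℝ) : Continuous (Phi2Integrand ν ρ) :=
  (continuous_stdCdf.comp (by fun_prop)).mul continuous_stdPdf

lemma continuous_Phi2IntegrandDeriv (ν ρ : ℝ) : Continuous (Phi2IntegrandDeriv ν ρ) :=
  ((continuous_stdPdf.comp (by fun_prop)).mul (by fun_prop)).mul continuous_stdPdf

lemma integrable_Phi2Integrand (ν ρ : ℝ) : Integrable (Phi2Integrand ν ρ) :=
  integrable_stdPdf.mono' (continuous_Phi2Integrand ν ρ).aestronglyMeasurable <|
    .of_forall fun v => by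
      rw [Real.norm_eq_abs, Phi2Integrand,
        abs_of_nonneg (mul_nonneg (stdCdf_nonneg _) (stdPdf_nonneg v))]
      exact mul_le_of_le_one_left (stdPdf_nonneg v) (stdCdf_le_one _)

section

variable {ρ : ℝ}

lemma hasDerivAt_div_sqrt_one_sub_sq (ν v : ℝ) (hρ : 0 < 1 - ρ ^ 2) :
    HasDerivAt (fun ρ => (ν - ρ * v) / √(1 - ρ ^ 2)) ((ρ * ν - v) / √(1 - ρ ^ 2) ^ 3) ρ := by
  have hs : 0 < √(1 - ρ ^ 2) := sqrt_pos.2 hρ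
  have hnum : HasDerivAt (fun ρ : ℝ => ν - ρ * v) (-v) ρ := by
    simpa using ((hasDerivAt_id ρ).mul_const v).const_sub ν
  have hden : HasDerivAt (fun ρ : ℝ => √(1 - ρ ^ 2)) (1 / (2 * √(1 - ρ ^ 2)) * -(2 * ρ)) ρ :=
    (hasDerivAt_sqrt hρ.ne').comp ρ (by simpa using (hasDerivAt_pow 2 ρ).const_sub 1)
  refine (hnum.fun_div hden hs.ne').congr_deriv ?_
  field_simp
  linear_combination (-v) * sq_sqrt hρ.le

lemma hasDerivAt_Phi2Integrand (ν v : ℝ) (hρ : 0 < 1 - ρ ^ 2) :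
    HasDerivAt (fun ρ => Phi2Integrand ν ρ v) (Phi2IntegrandDeriv ν ρ v) ρ :=
  ((hasDerivAt_stdCdf _).comp ρ (hasDerivAt_div_sqrt_one_sub_sq ν v hρ)).mul_const (stdPdf v)

lemma stdPdf_mul_stdPdf (ν v : ℝ) (hρ : 0 < 1 - ρ ^ 2) :
    stdPdf ((ν - ρ * v) / √(1 - ρ ^ 2)) * stdPdf v = √(1 - ρ ^ 2) * phi2 v ν ρ := by
  have hexp : -((ν - ρ * v) / √(1 - ρ ^ 2)) ^ 2 / 2 + -v ^ 2 / 2 =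
      -(v ^ 2 - 2 * ρ * v * ν + ν ^ 2) / (2 * (1 - ρ ^ 2)) := by
    rw [div_pow, sq_sqrt hρ.le]
    field_simp
    ring
  have hs : 0 < √(1 - ρ ^ 2) := sqrt_pos.2 hρ
  unfold stdPdf phi2
  rw [mul_mul_mul_comm, ← exp_add, hexp, ← mul_inv, mul_self_sqrt (by positivity)]
  field_simp

lemma hasDerivAt_phi2_left (ν v : ℝ) (hρ : 0 < 1 - ρ ^ 2) :
    HasDerivAt (fun v => phi2 v ν ρ) (Phi2IntegrandDeriv ν ρ v) v := by
  have hexp : HasDerivAt (fun v => -(v ^ 2 - 2 * ρ * v * ν + ν ^ 2) / (2 * (1 - ρ ^ 2)))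
      ((ρ * ν - v) / (1 - ρ ^ 2)) v := by
    refine ((((hasDerivAt_pow 2 v).sub (((hasDerivAt_id v).const_mul (2 * ρ)).mul_const ν)
      ).add_const (ν ^ 2)).neg.div_const (2 * (1 - ρ ^ 2))).congr_deriv ?_
    field_simp
    ring
  have hs : 0 < √(1 - ρ ^ 2) := sqrt_pos.2 hρ
  have hs3 : √(1 - ρ ^ 2) ^ 3 = √(1 - ρ ^ 2) * (1 - ρ ^ 2) := by
    rw [pow_succ, sq_sqrt hρ.le, mul_comm]
  refine (hexp.exp.const_mul (2 * π * √(1 - ρ ^ 2))⁻¹).congr_deriv ?_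
  symm
  rw [Phi2IntegrandDeriv, mul_right_comm, stdPdf_mul_stdPdf ν v hρ, phi2, hs3]
  field_simp

lemma tendsto_phi2_atBot_left (ν : ℝ) (hρ : 0 < 1 - ρ ^ 2) :
    Tendsto (fun v => phi2 v ν ρ) atBot (𝓝 0) := by
  have hlin : Tendsto (fun v : ℝ => ρ * ν - v) atBot atTop := by
    simpa only [sub_eq_add_neg] using
      tendsto_atTop_add_const_left atBot (ρ * ν) tendsto_neg_atBot_atTop
  have hexp : Tendsto (fun v => -(v ^ 2 - 2 * ρ * v * ν + ν ^ 2) / (2 * (1 - ρ ^ 2)))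
      atBot atBot := by
    have h := (tendsto_atTop_add_const_right _ ((1 - ρ ^ 2) * ν ^ 2)
      ((tendsto_pow_atTop two_ne_zero).comp hlin)).atTop_div_const_of_neg
      (neg_lt_zero.2 (by positivity : 0 < 2 * (1 - ρ ^ 2)))
    refine h.congr fun v => ?_
    simp only [Function.comp_apply, div_neg, neg_div]
    ring
  simpa only [phi2, Function.comp_def, mul_zero] using
    (tendsto_exp_atBot.comp hexp).const_mul (2 * π * √(1 - ρ ^ 2))⁻¹

lemma abs_Phi2IntegrandDeriv_le (ν v : ℝ) {δ : ℝ} (hδ : 0 < δ) (hρ : δ ≤ 1 - ρ ^ 2) :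
    |Phi2IntegrandDeriv ν ρ v| ≤ (√(2 * π))⁻¹ * (√δ ^ 3)⁻¹ * ((|ν| + |v|) * stdPdf v) := by
  have hρ1 : |ρ| ≤ 1 := (sq_le_one_iff_abs_le_one ρ).1 (by linarith)
  have hnum : |ρ * ν - v| ≤ |ν| + |v| :=
    (abs_sub _ _).trans <| by
      rw [abs_mul]
      gcongr
      exact mul_le_of_le_one_left (abs_nonneg ν) hρ1
  have hden : √δ ^ 3 ≤ √(1 - ρ ^ 2) ^ 3 := by gcongr
  rw [Phi2IntegrandDeriv, abs_mul, abs_mul, abs_of_nonneg (stdPdf_nonneg _),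
    abs_of_nonneg (stdPdf_nonneg _), abs_div, abs_of_nonneg (pow_nonneg (sqrt_nonneg _) 3)]
  calc _ ≤ (√(2 * π))⁻¹ * ((|ν| + |v|) / √δ ^ 3) * stdPdf v := by
        gcongr
        · exact stdPdf_nonneg v
        · exact stdPdf_le _
    _ = _ := by ring

lemma integrable_Phi2IntegrandDeriv (ν : ℝ) (hρ : 0 < 1 - ρ ^ 2) :
    Integrable (Phi2IntegrandDeriv ν ρ) :=
  ((integrable_add_abs_mul_stdPdf |ν|).const_mul _).mono'
    (continuous_Phi2IntegrandDeriv ν ρ).aestronglyMeasurable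
    (.of_forall fun v => abs_Phi2IntegrandDeriv_le ν v hρ le_rfl)

lemma setIntegral_Iio_Phi2IntegrandDeriv (μ ν : ℝ) (hρ : 0 < 1 - ρ ^ 2) :
    ∫ v in Iio μ, Phi2IntegrandDeriv ν ρ v = phi2 μ ν ρ := by
  rw [← integral_Iic_eq_integral_Iio, integral_Iic_of_hasDerivAt_of_tendsto'
    (fun v _ => hasDerivAt_phi2_left ν v hρ) (integrable_Phi2IntegrandDeriv ν hρ).integrableOn
    (tendsto_phi2_atBot_left ν hρ), sub_zero]

lemma phi2_pos (μ ν : ℝ) (hρ : 0 < 1 - ρ ^ 2) : 0 < phi2 μ ν ρ := by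
  have := sqrt_pos.2 hρ
  unfold phi2
  positivity

end

theorem hasDerivAt_Phi2 (μ ν : ℝ) {ρ₀ : ℝ} (hρ₀ : 0 < 1 - ρ₀ ^ 2) :
    HasDerivAt (fun ρ => Phi2 μ ν ρ) (phi2 μ ν ρ₀) ρ₀ := by
  set δ := (1 - ρ₀ ^ 2) / 2
  have hδ : 0 < δ := half_pos hρ₀
  have hnhds : {ρ : ℝ | δ < 1 - ρ ^ 2} ∈ 𝓝 ρ₀ :=
    (isOpen_lt continuous_const (by fun_prop)).mem_nhds (half_lt_self hρ₀)
  have key := hasDerivAt_integral_of_dominated_loc_of_deriv_le (μ := volume.restrict (Iio μ))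
    (F := fun ρ v => Phi2Integrand ν ρ v) (F' := fun ρ v => Phi2IntegrandDeriv ν ρ v)
    (bound := fun v => (√(2 * π))⁻¹ * (√δ ^ 3)⁻¹ * ((|ν| + |v|) * stdPdf v)) hnhds
    (.of_forall fun ρ => (continuous_Phi2Integrand ν ρ).aestronglyMeasurable)
    (integrable_Phi2Integrand ν ρ₀).restrict
    (continuous_Phi2IntegrandDeriv ν ρ₀).aestronglyMeasurable
    (ae_of_all _ fun v ρ hρ => abs_Phi2IntegrandDeriv_le ν v hδ (le_of_lt hρ))
    ((integrable_add_abs_mul_stdPdf |ν|).const_mul _).restrict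
    (ae_of_all _ fun v ρ hρ => hasDerivAt_Phi2Integrand ν v (hδ.trans hρ))
  rw [← setIntegral_Iio_Phi2IntegrandDeriv μ ν hρ₀]
  exact key.2

theorem stmt2 (μ ν : ℝ) :
    StrictMonoOn (fun ρ => Phi2 μ ν ρ) (Set.Ioo (-1 : ℝ) 1) := by
  have hpos : ∀ ρ ∈ Ioo (-1 : ℝ) 1, 0 < 1 - ρ ^ 2 := fun ρ hρ =>
    sub_pos.2 ((sq_lt_one_iff_abs_lt_one ρ).2 (abs_lt.2 hρ))
  refine strictMonoOn_of_deriv_pos (convex_Ioo _ _)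
    (fun ρ hρ => (hasDerivAt_Phi2 μ ν (hpos ρ hρ)).continuousAt.continuousWithinAt)
    fun ρ hρ => ?_
  rw [interior_Ioo] at hρ
  rw [(hasDerivAt_Phi2 μ ν (hpos ρ hρ)).deriv]
  exact phi2_pos μ ν (hpos ρ hρ)
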